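/- arXiv:0909.3367 — 2 statements merged into one kernel-verified Lean document; each statement's English description precedes it below -/
import Mathlib

section
/- (Case 3) Let α, β ∈ ℂ with (α, β) ≠ (0, 0), and let η := (1,1,1,1,1,1,1,1,−4,−4) ∈ ℂ^{10}. Then there exists μ ∈ ℂ with (∂F_{α,β}/∂x_i)(η) = μ for all i = 0,…,9 if and only if 49α + 100β = 0; that is, η is a singular point of the hyperquintic Q_{(α:β)} exactly for (α : β) = (100 : −49). -/
/-!
Writing `x̂` for `x` with `x_i` omitted, `S_{k+1} = S_{k+1}(x̂) + x_i S_k(x̂)` gives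
`∂S_{k+1}/∂x_i = S_k(x̂) = ∑_{j ≤ k} (-x_i)^j S_{k-j}`. So at `η`, where
`S_1, …, S_4 = 0, -20, -40, 70`, the `i`-th partial derivative of `F_{α,β}` is
`α (70 + 40x - 20x² + x⁴) + β (400 + 40x - 20x²)` with `x = η_i`. As `η` takes exactly the values
`1` and `-4`, the partials all agree iff `91α + 420β = -154α - 80β`, i.e. `49α + 100β = 0`.
-/

open MvPolynomial

namespace Multiset

variable {R : Type*} [CommSemiring R]

theorem esymm_zero_right (s : Multiset R) : s.esymm 0 = 1 := by
  simp [esymm]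

theorem esymm_zero_left_succ (k : ℕ) : (0 : Multiset R).esymm (k + 1) = 0 := by
  simp [esymm, powersetCard_zero_right]

theorem esymm_cons_succ (a : R) (s : Multiset R) (k : ℕ) :
    (a ::ₘ s).esymm (k + 1) = s.esymm (k + 1) + a * s.esymm k := by
  simp only [esymm, powersetCard_cons, map_add, sum_add, map_map, Function.comp_def, prod_cons,
    sum_map_mul_left]

end Multiset

theorem Derivation.map_multiset_esymm_eq_zero {R A M : Type*} [CommSemiring R] [CommSemiring A]
    [Algebra R A] [AddCommMonoid M] [Module A M] [Module R M] (D : Derivation R A M)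
    {s : Multiset A} (hs : ∀ a ∈ s, D a = 0) (k : ℕ) : D (s.esymm k) = 0 := by
  induction s using Multiset.induction_on generalizing k with
  | empty => cases k <;> simp [Multiset.esymm_zero_right, Multiset.esymm_zero_left_succ]
  | cons a s ih =>
    have hs' : ∀ b ∈ s, D b = 0 := fun b hb => hs b (Multiset.mem_cons_of_mem hb)
    cases k with
    | zero => simp [Multiset.esymm_zero_right]
    | succ k =>
      rw [Multiset.esymm_cons_succ, map_add, D.leibniz, ih hs', ih hs',
        hs a (Multiset.mem_cons_self a s)]
      simp

namespace MvPolynomial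

variable {σ R : Type*} [Fintype σ]

theorem eval_esymm_eq_multiset_esymm [CommSemiring R] (x : σ → R) (k : ℕ) :
    eval x (esymm σ R k) = (Finset.univ.val.map x).esymm k := by
  rw [← aeval_eq_eval, aeval_esymm_eq_multiset_esymm]

variable [DecidableEq σ]

theorem esymm_succ_eq_erase [CommSemiring R] (i : σ) (k : ℕ) :
    esymm σ R (k + 1) = ((Finset.univ.erase i).val.map X).esymm (k + 1)
      + X i * ((Finset.univ.erase i).val.map X).esymm k := by
  rw [esymm_eq_multiset_esymm, ← Multiset.esymm_cons_succ, ← Multiset.map_cons,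
    Finset.erase_val, Multiset.cons_erase (Finset.mem_univ_val i)]

theorem pderiv_esymm_succ [CommSemiring R] (i : σ) (k : ℕ) :
    pderiv i (esymm σ R (k + 1)) = ((Finset.univ.erase i).val.map X).esymm k := by
  have hconst : ∀ m,
      pderiv i (((Finset.univ.erase i).val.map (X : σ → MvPolynomial σ R)).esymm m) = 0 := by
    refine (pderiv i).map_multiset_esymm_eq_zero fun p hp => ?_
    obtain ⟨j, hj, rfl⟩ := Multiset.mem_map.mp hp
    exact pderiv_X_of_ne (Finset.ne_of_mem_erase hj)
  rw [esymm_succ_eq_erase i, map_add, Derivation.leibniz, hconst, hconst, pderiv_X_self]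
  simp

theorem pderiv_esymm_succ_eq_sum [CommRing R] (i : σ) (k : ℕ) :
    pderiv i (esymm σ R (k + 1))
      = ∑ j ∈ Finset.range (k + 1), (-X i) ^ j * esymm σ R (k - j) := by
  induction k with
  | zero => simp
  | succ k ih =>
    rw [pderiv_esymm_succ, Finset.sum_range_succ',
      eq_sub_of_add_eq (esymm_succ_eq_erase (R := R) i k).symm, ← pderiv_esymm_succ, ih,
      Finset.mul_sum, sub_eq_neg_add, ← Finset.sum_neg_distrib]
    simp only [Nat.add_sub_add_right, Nat.sub_zero, pow_zero, one_mul]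
    exact congrArg (· + _) (Finset.sum_congr rfl fun j _ => by ring)

theorem eval_pderiv_C_mul_esymm_five_add_C_mul_esymm_two_mul_three [CommRing R] (a b : R)
    (x : σ → R) (i : σ) :
    eval x (pderiv i (C a * esymm σ R 5 + C b * (esymm σ R 2 * esymm σ R 3)))
      = a * (eval x (esymm σ R 4) - x i * eval x (esymm σ R 3)
          + x i ^ 2 * eval x (esymm σ R 2) - x i ^ 3 * eval x (esymm σ R 1) + x i ^ 4)
        + b * (eval x (esymm σ R 3) * (eval x (esymm σ R 1) - x i)
          + eval x (esymm σ R 2)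
            * (eval x (esymm σ R 2) - x i * eval x (esymm σ R 1) + x i ^ 2)) := by
  simp only [map_add, map_mul, Derivation.leibniz, pderiv_C, smul_eq_mul, mul_zero, add_zero,
    pderiv_esymm_succ_eq_sum, Finset.sum_range_succ, Finset.sum_range_zero, zero_add, eval_C,
    map_pow, map_neg, eval_X, Nat.sub_self, esymm_zero, map_one]
  ring

end MvPolynomial

theorem case3_singular_iff_general (α β : ℂ) (η : Fin 10 → ℂ)
    (hη : η = ![1, 1, 1, 1, 1, 1, 1, 1, -4, -4]) :
    (∃ μ : ℂ, ∀ i, eval η (pderiv i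
        (C α * esymm (Fin 10) ℂ 5 + C β * (esymm (Fin 10) ℂ 2 * esymm (Fin 10) ℂ 3))) = μ)
      ↔ 49 * α + 100 * β = 0 := by
  have hS : ∀ k, eval η (esymm (Fin 10) ℂ k) =
      (1 ::ₘ 1 ::ₘ 1 ::ₘ 1 ::ₘ 1 ::ₘ 1 ::ₘ 1 ::ₘ 1 ::ₘ -4 ::ₘ -4 ::ₘ 0 : Multiset ℂ).esymm k := by
    intro k
    rw [eval_esymm_eq_multiset_esymm, hη, Fin.univ_val_map]
    rfl
  obtain ⟨hS1, hS2, hS3, hS4⟩ : eval η (esymm (Fin 10) ℂ 1) = 0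
      ∧ eval η (esymm (Fin 10) ℂ 2) = -20 ∧ eval η (esymm (Fin 10) ℂ 3) = -40
      ∧ eval η (esymm (Fin 10) ℂ 4) = 70 := by
    simp only [hS, Multiset.esymm_cons_succ, Multiset.esymm_zero_left_succ,
      Multiset.esymm_zero_right]
    norm_num
  have hD : ∀ i, eval η (pderiv i
      (C α * esymm (Fin 10) ℂ 5 + C β * (esymm (Fin 10) ℂ 2 * esymm (Fin 10) ℂ 3))) =
      α * (70 + 40 * η i - 20 * η i ^ 2 + η i ^ 4) + β * (400 + 40 * η i - 20 * η i ^ 2) := by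
    intro i
    rw [eval_pderiv_C_mul_esymm_five_add_C_mul_esymm_two_mul_three, hS1, hS2, hS3, hS4]
    ring
  have hvals : ∀ i, η i = 1 ∨ η i = -4 := by
    subst hη
    intro i
    fin_cases i <;> simp
  constructor
  · rintro ⟨μ, hμ⟩
    have h := (hμ 0).trans (hμ 8).symm
    rw [hD, hD, show η 0 = 1 by simp [hη], show η 8 = -4 by simp [hη]] at h
    linear_combination h / 5
  · intro h
    refine ⟨91 * α + 420 * β, fun i => ?_⟩
    rcases hvals i with hx | hx <;> rw [hD, hx]
    · ring
    · linear_combination (-5 : ℂ) * h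

/-- **Case 3.** For `(α, β) ≠ (0, 0)`, the point `η = (1,…,1,−4,−4)` is a singular
point of the hyperquintic `Q_{(α:β)} = {α·S₅ + β·S₂·S₃ = 0}` in `ℙ⁸(ℂ)` if and only if
`49α + 100β = 0`, i.e. exactly for `(α : β) = (100 : −49)`. -/
theorem case3_singular_iff (α β : ℂ) (hαβ : (α, β) ≠ (0, 0)) (η : Fin 10 → ℂ)
    (hη : η = ![1, 1, 1, 1, 1, 1, 1, 1, -4, -4]) :
    (∃ μ : ℂ, ∀ i, eval η (pderiv i
        (C α * esymm (Fin 10) ℂ 5 + C β * (esymm (Fin 10) ℂ 2 * esymm (Fin 10) ℂ 3))) = μ)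
      ↔ 49 * α + 100 * β = 0 :=
  case3_singular_iff_general α β η hη
end

section
/- (Case 8) Let α, β ∈ ℂ with (α, β) ≠ (0, 0), and let η := (2,2,2,2,2,2,−3,−3,−3,−3) ∈ ℂ^{10}. Then there exists μ ∈ ℂ with (∂F_{α,β}/∂x_i)(η) = μ for all i = 0,…,9 if and only if 37α + 50β = 0; that is, η is a singular point of the hyperquintic Q_{(α:β)} exactly for (α : β) = (50 : −37). -/
/-!
Differentiating the splitting of `S_k` according to whether a `k`-subset contains `i` gives
`∂ᵢS_{k+1} = S_k - xᵢ ∂ᵢS_k`, hence `∂ᵢS_{k+1} = ∑_{j ≤ k} (-xᵢ)^j S_{k-j}`. At `η` the power sums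
are `C_k(η) = 6·2^k + 4·(-3)^k`, so Newton's identities give `S₁, …, S₄ = 0, -30, -20, 345` and
`∂ᵢF(η) = P(ηᵢ)` with `P(x) = α(x⁴ - 30x² + 20x + 345) + β(-30x² + 20x + 900)`. Since `ηᵢ` takes
exactly the values `2` and `-3`, all partials agree iff `P(2) = P(-3)`, i.e. `5(37α + 50β) = 0`.
-/

open MvPolynomial Finset

theorem exists_forall_comp_eq_iff_of_range_eq_pair {ι α β : Type*} {f : ι → α} {a b : α}
    (hf : Set.range f = {a, b}) (P : α → β) : (∃ μ, ∀ i, P (f i) = μ) ↔ P a = P b := by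
  constructor
  · rintro ⟨μ, hμ⟩
    obtain ⟨i, rfl⟩ : a ∈ Set.range f := hf ▸ Set.mem_insert a {b}
    obtain ⟨j, rfl⟩ : b ∈ Set.range f := hf ▸ Set.mem_insert_of_mem _ rfl
    rw [hμ, hμ]
  · intro h
    refine ⟨P a, fun i => ?_⟩
    obtain hi | hi : f i = a ∨ f i = b := by
      simpa only [hf, Set.mem_insert_iff, Set.mem_singleton_iff] using Set.mem_range_self (f := f) i
    · rw [hi]
    · rw [hi, h]

namespace MvPolynomial

variable {σ R : Type*}

section CommSemiring

variable [CommSemiring R]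

theorem pderiv_prod_X [DecidableEq σ] (i : σ) (t : Finset σ) :
    pderiv i (∏ j ∈ t, X j : MvPolynomial σ R) = if i ∈ t then ∏ j ∈ t.erase i, X j else 0 := by
  induction t using Finset.induction_on with
  | empty => simp
  | insert a t ha ih =>
    rw [prod_insert ha, pderiv_mul, ih]
    by_cases hai : a = i
    · subst hai
      simp [ha]
    · have hat : a ∉ t.erase i := fun h => ha (mem_of_mem_erase h)
      by_cases hi : i ∈ t
      · simp [hi, pderiv_X_of_ne hai, erase_insert_of_ne hai, prod_insert hat, mul_comm]
      · simp [hi, pderiv_X_of_ne hai, Ne.symm hai]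

theorem X_mul_pderiv_prod_X [DecidableEq σ] (i : σ) (t : Finset σ) :
    X i * pderiv i (∏ j ∈ t, X j : MvPolynomial σ R) = if i ∈ t then ∏ j ∈ t, X j else 0 := by
  rw [pderiv_prod_X]
  split_ifs with hi
  · exact mul_prod_erase t X hi
  · exact mul_zero _

theorem pderiv_esymm_succ_add_X_mul_pderiv_esymm [Fintype σ] (i : σ) (k : ℕ) :
    pderiv i (esymm σ R (k + 1)) + X i * pderiv i (esymm σ R k) = esymm σ R k := by
  classical
  have herase : ∑ t ∈ powersetCard (k + 1) univ with i ∈ t, ∏ j ∈ t.erase i, (X j : MvPolynomial σ R)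
      = ∑ t ∈ powersetCard k univ with i ∉ t, ∏ j ∈ t, X j := by
    refine sum_nbij' (·.erase i) (insert i) ?_ ?_ ?_ ?_ (fun _ _ => rfl)
    · intro t ht
      simp only [mem_filter, mem_powersetCard_univ] at ht ⊢
      exact ⟨by rw [card_erase_of_mem ht.2, ht.1]; rfl, notMem_erase i t⟩
    · intro t ht
      simp only [mem_filter, mem_powersetCard_univ] at ht ⊢
      exact ⟨by rw [card_insert_of_notMem ht.2, ht.1], mem_insert_self i t⟩
    · intro t ht
      simp only [mem_filter] at ht
      exact insert_erase ht.2
    · intro t ht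
      simp only [mem_filter] at ht
      exact erase_insert ht.2
  simp only [esymm, map_sum, mul_sum, X_mul_pderiv_prod_X]
  simp only [pderiv_prod_X]
  rw [← sum_filter, ← sum_filter, herase]
  exact sum_filter_not_add_sum_filter _ _ _

end CommSemiring

section CommRing

variable [Fintype σ] [CommRing R]

theorem pderiv_esymm_succ_s9 (i : σ) (k : ℕ) :
    pderiv i (esymm σ R (k + 1)) = ∑ j ∈ range (k + 1), (-X i) ^ j * esymm σ R (k - j) := by
  induction k with
  | zero =>
    simpa [esymm_zero] using pderiv_esymm_succ_add_X_mul_pderiv_esymm (R := R) i 0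
  | succ k ih =>
    rw [eq_sub_of_add_eq (pderiv_esymm_succ_add_X_mul_pderiv_esymm (R := R) i (k + 1)), ih,
      sum_range_succ' _ (k + 1), mul_sum, sub_eq_add_neg, ← sum_neg_distrib, add_comm]
    simp only [Nat.add_sub_add_right, Nat.sub_zero, pow_zero, one_mul]
    congr 1
    exact sum_congr rfl fun j _ => by ring

theorem mul_esymm_eq_sum_range (k : ℕ) :
    (k : MvPolynomial σ R) * esymm σ R k =
      (-1) ^ (k + 1) * ∑ j ∈ range k, (-1) ^ j * esymm σ R j * psum σ R (k - j) := by
  rw [mul_esymm_eq_sum, sum_filter, Nat.sum_antidiagonal_eq_sum_range_succ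
    (fun a b => if a < k then (-1) ^ a * esymm σ R a * psum σ R b else 0), sum_range_succ,
    if_neg (lt_irrefl k), add_zero]
  congr 1
  exact sum_congr rfl fun j hj => if_pos (mem_range.mp hj)

end CommRing

end MvPolynomial

local notation "η₀" => (![2, 2, 2, 2, 2, 2, -3, -3, -3, -3] : Fin 10 → ℂ)

theorem eval_psum_eta (k : ℕ) : eval η₀ (psum (Fin 10) ℂ k) = 6 * 2 ^ k + 4 * (-3) ^ k := by
  rw [psum, map_sum]
  simp only [map_pow, eval_X, Fin.sum_univ_succ, Fin.sum_univ_zero, Fin.succ_zero_eq_one,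
    Fin.succ_one_eq_two, Fin.reduceSucc, Matrix.cons_val_zero, Matrix.cons_val_one, Matrix.cons_val]
  ring

theorem eval_esymm_eta :
    eval η₀ (esymm (Fin 10) ℂ 1) = 0 ∧ eval η₀ (esymm (Fin 10) ℂ 2) = -30 ∧
      eval η₀ (esymm (Fin 10) ℂ 3) = -20 ∧ eval η₀ (esymm (Fin 10) ℂ 4) = 345 := by
  have newton (k : ℕ) := congrArg (eval η₀) (mul_esymm_eq_sum_range (σ := Fin 10) (R := ℂ) k)
  have h1 := newton 1
  have h2 := newton 2
  have h3 := newton 3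
  have h4 := newton 4
  simp only [sum_range_succ, sum_range_zero, Nat.reduceSub, esymm_zero, map_add, map_mul, map_pow,
    map_neg, map_one, map_zero, map_natCast, eval_psum_eta] at h1 h2 h3 h4
  have e1 : eval η₀ (esymm (Fin 10) ℂ 1) = 0 := by linear_combination h1
  have e2 : eval η₀ (esymm (Fin 10) ℂ 2) = -30 := by linear_combination h2 / 2
  have e3 : eval η₀ (esymm (Fin 10) ℂ 3) = -20 := by linear_combination h3 / 3 - 20 * e1
  have e4 : eval η₀ (esymm (Fin 10) ℂ 4) = 345 := by
    linear_combination h4 / 4 - 15 * e1 - 15 * e2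
  exact ⟨e1, e2, e3, e4⟩

theorem eval_pderiv_eta (α β : ℂ) (i : Fin 10) :
    eval η₀ (pderiv i
        (C α * esymm (Fin 10) ℂ 5 + C β * (esymm (Fin 10) ℂ 2 * esymm (Fin 10) ℂ 3))) =
      α * (345 + 20 * η₀ i - 30 * η₀ i ^ 2 + η₀ i ^ 4) + β * (900 + 20 * η₀ i - 30 * η₀ i ^ 2) := by
  obtain ⟨e1, e2, e3, e4⟩ := eval_esymm_eta
  simp only [map_add, pderiv_mul, pderiv_C, map_mul, eval_C, pderiv_esymm_succ_s9,
    sum_range_succ, sum_range_zero, Nat.reduceSub, map_pow, map_neg, eval_X, esymm_zero, map_one,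
    map_zero, e1, e2, e3, e4]
  ring

theorem range_eta : Set.range η₀ = {2, -3} := by
  simp [Matrix.range_cons, Matrix.range_empty, Set.pair_comm]

theorem case8_singular_iff_general (α β : ℂ) (η : Fin 10 → ℂ)
    (hη : η = ![2, 2, 2, 2, 2, 2, -3, -3, -3, -3]) :
    (∃ μ : ℂ, ∀ i, eval η (pderiv i
        (C α * esymm (Fin 10) ℂ 5 + C β * (esymm (Fin 10) ℂ 2 * esymm (Fin 10) ℂ 3))) = μ)
      ↔ 37 * α + 50 * β = 0 := by
  subst hη
  simp only [eval_pderiv_eta]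
  refine (exists_forall_comp_eq_iff_of_range_eq_pair range_eta
    fun x => α * (345 + 20 * x - 30 * x ^ 2 + x ^ 4) + β * (900 + 20 * x - 30 * x ^ 2)).trans ?_
  constructor
  · intro h
    linear_combination h / 5
  · intro h
    linear_combination 5 * h

/-- **Case 8.** For `(α, β) ≠ (0, 0)`, the point `η = (2,…,2,−3,−3,−3,−3)` is a
singular point of the hyperquintic `Q_{(α:β)} = {α·S₅ + β·S₂·S₃ = 0}` in `ℙ⁸(ℂ)` if and only if
`37α + 50β = 0`, i.e. exactly for `(α : β) = (50 : −37)`. -/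
theorem case8_singular_iff (α β : ℂ) (hαβ : (α, β) ≠ (0, 0)) (η : Fin 10 → ℂ)
    (hη : η = ![2, 2, 2, 2, 2, 2, -3, -3, -3, -3]) :
    (∃ μ : ℂ, ∀ i, eval η (pderiv i
        (C α * esymm (Fin 10) ℂ 5 + C β * (esymm (Fin 10) ℂ 2 * esymm (Fin 10) ℂ 3))) = μ)
      ↔ 37 * α + 50 * β = 0 :=
  case8_singular_iff_general α β η hη
end
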